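/- If v < 0, then the pure strategy DD (the fourth standard basis vector e₄ of ℝ⁴) is a strict symmetric Nash equilibrium of the asymmetric Hawk-Dove game: for every mixed strategy σ ∈ ℝ⁴ (entries nonnegative, summing to 1), σᵀ A e₄ ≤ e₄ᵀ A e₄ = v/2, with strict inequality whenever σ ≠ e₄. -/
import Mathlib


open Matrix

noncomputable section

/-- The payoff matrix of the asymmetric Hawk-Dove game, with rows and columns
indexed by the pure strategies (HH, HD, DH, DD). -/
def A (v c : ℝ) : Matrix (Fin 4) (Fin 4) ℝ :=
  !![(v - c)/2, (3*v - c)/4, (3*v - c)/4, v;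
     (v - c)/4, v/2,         (2*v - c)/4, 3*v/4;
     (v - c)/4, (2*v - c)/4, v/2,         3*v/4;
     0,         v/4,         v/4,         v/2]

theorem strict_nash_DD (v c : ℝ) (hv : v < 0) :
    (Pi.single (3 : Fin 4) (1 : ℝ)) ⬝ᵥ (A v c).mulVec (Pi.single 3 1) = v/2 ∧
    ∀ σ : Fin 4 → ℝ, (∀ i, 0 ≤ σ i) → (∑ i, σ i) = 1 →
      (σ ⬝ᵥ (A v c).mulVec (Pi.single 3 1)
        ≤ (Pi.single (3 : Fin 4) (1 : ℝ)) ⬝ᵥ (A v c).mulVec (Pi.single 3 1) ∧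
      (σ ≠ Pi.single 3 1 →
        σ ⬝ᵥ (A v c).mulVec (Pi.single 3 1)
          < (Pi.single (3 : Fin 4) (1 : ℝ)) ⬝ᵥ (A v c).mulVec (Pi.single 3 1))) := by
  have key : ∀ σ : Fin 4 → ℝ,
      σ ⬝ᵥ (A v c).mulVec (Pi.single 3 1)
        = σ 0 * v + σ 1 * (3*v/4) + σ 2 * (3*v/4) + σ 3 * (v/2) := by
    intro σ
    simp [A, mulVec, dotProduct, Fin.sum_univ_four, Pi.single_apply]
  have hself : (Pi.single (3 : Fin 4) (1 : ℝ)) ⬝ᵥ (A v c).mulVec (Pi.single 3 1) = v/2 := by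
    rw [key]
    simp [Pi.single_apply]
  refine ⟨hself, fun σ hpos hsum => ?_⟩
  rw [key, hself]
  have hsum4 : σ 0 + σ 1 + σ 2 + σ 3 = 1 := by
    simpa [Fin.sum_univ_four] using hsum
  have h0 := hpos 0; have h1 := hpos 1; have h2 := hpos 2
  constructor
  · nlinarith
  · intro hne
    have hstrict : 0 < σ 0 + σ 1 + σ 2 := by
      by_contra h
      push_neg at h
      have e0 : σ 0 = 0 := by linarith
      have e1 : σ 1 = 0 := by linarith
      have e2 : σ 2 = 0 := by linarith
      have e3 : σ 3 = 1 := by linarith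
      apply hne
      funext i
      fin_cases i <;> simp [e0, e1, e2, e3, Pi.single_apply]
    nlinarith
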